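/- Let X, Y be Banach spaces, I ⊆ ℝ an interval, U ⊆ X open, and F : I × U → Y continuously differentiable. Suppose the partial derivative D₂F(t, x) : X → Y is a Banach space isomorphism for every (t, x) ∈ I × U. If γ₁, γ₂ : I → U are continuous curves with F(t, γ₁(t)) = 0 = F(t, γ₂(t)) for all t ∈ I and γ₁(t₀) = γ₂(t₀) for some t₀ ∈ I, then γ₁ = γ₂ on I. -/

import Mathlib

/-!
The set where the two curves agree is closed by continuity, and it is open: near a common point
`(s, x₀)` the partial derivatives `D₂F (t, x)` stay uniformly close to the invertible `D₂F (s, x₀)`,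
so by the mean value inequality every `F (t, ·)` with `t` near `s` is injective on one fixed ball
around `x₀`, a ball that both curves stay in for `t` near `s`. Since `I` is connected, the set is
all of `I`.
-/

open Set Filter Topology Metric
open scoped NNReal

theorem IsPreconnected.eqOn_of_eventuallyEq {α β : Type*} [TopologicalSpace α]
    [TopologicalSpace β] [T2Space β] {s : Set α} {f g : α → β} (hs : IsPreconnected s)
    (hf : ContinuousOn f s) (hg : ContinuousOn g s)
    (hloc : ∀ x ∈ s, f x = g x → f =ᶠ[𝓝[s] x] g) {x₀ : α} (hx₀ : x₀ ∈ s)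
    (h₀ : f x₀ = g x₀) : EqOn f g s := by
  have : PreconnectedSpace s := Subtype.preconnectedSpace hs
  set T : Set s := {x | f x = g x}
  have hT_closed : IsClosed T := isClosed_eq hf.domRestrict hg.domRestrict
  have hT_open : IsOpen T := isOpen_iff_mem_nhds.2 fun x hx => by
    rw [nhds_subtype_eq_comap_nhdsWithin]
    exact (hloc x x.2 hx).comap _
  have hT : T = univ := IsClopen.eq_univ ⟨hT_closed, hT_open⟩ ⟨⟨x₀, hx₀⟩, h₀⟩
  intro x hx
  have hxT : (⟨x, hx⟩ : s) ∈ T := hT ▸ mem_univ _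
  exact hxT

section Implicit

variable {P X Y : Type*} [NormedAddCommGroup X] [NormedSpace ℝ X]
  [NormedAddCommGroup Y] [NormedSpace ℝ Y]

theorem HasFDerivWithinAt.hasFDerivAt_partial_snd [NormedAddCommGroup P] [NormedSpace ℝ P]
    {F : P × X → Y} {F' : P × X →L[ℝ] Y} {I : Set P} {U : Set X} {t : P} {x : X}
    (hF : HasFDerivWithinAt F F' (I ×ˢ U) (t, x)) (ht : t ∈ I) (hU : U ∈ 𝓝 x) :
    HasFDerivAt (fun y => F (t, y)) (F' ∘L .inr ℝ P X) x :=
  (hF.comp x (hasFDerivAt_prodMk_right t x).hasFDerivWithinAt fun _ hy => ⟨ht, hy⟩).hasFDerivAt hU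

variable [TopologicalSpace P] {F : P × X → Y} {D : P × X → X →L[ℝ] Y} {I : Set P} {U : Set X}

theorem exists_ball_eventually_approximatesLinearOn (hU : IsOpen U)
    (hF : ∀ p ∈ I ×ˢ U, HasFDerivAt (fun x => F (p.1, x)) (D p) p.2) {s : P} {x₀ : X}
    (hx₀ : x₀ ∈ U) (hD : ContinuousWithinAt D (I ×ˢ U) (s, x₀)) {c : ℝ≥0} (hc : 0 < c) :
    ∃ ρ > 0, ∀ᶠ t in 𝓝[I] s,
      ApproximatesLinearOn (fun x => F (t, x)) (D (s, x₀)) (ball x₀ ρ) c := by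
  have hclose : ∀ᶠ p in 𝓝[I] s ×ˢ 𝓝 x₀, p ∈ I ×ˢ U ∧ ‖D p - D (s, x₀)‖ ≤ c := by
    rw [← hU.nhdsWithin_eq hx₀, ← nhdsWithin_prod_eq]
    filter_upwards [self_mem_nhdsWithin, hD.eventually (closedBall_mem_nhds _ hc)] with p hp hpD
    exact ⟨hp, by rwa [← dist_eq_norm]⟩
  obtain ⟨pI, hpI, pU, hpU, hp⟩ := eventually_prod_iff.1 hclose
  obtain ⟨ρ, hρ, hball⟩ := eventually_nhds_iff_ball.1 hpU
  refine ⟨ρ, hρ, hpI.mono fun t ht x hx y hy => ?_⟩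
  exact (convex_ball x₀ ρ).norm_image_sub_le_of_norm_hasFDerivWithin_le' (f := fun x => F (t, x))
    (fun z hz => (hF _ (hp ht (hball z hz)).1).hasFDerivWithinAt)
    (fun z hz => (hp ht (hball z hz)).2) hy hx

theorem eventuallyEq_of_isInvertible_partialFDeriv (hU : IsOpen U)
    (hF : ∀ p ∈ I ×ˢ U, HasFDerivAt (fun x => F (p.1, x)) (D p) p.2) {s : P}
    {γ₁ γ₂ : P → X} (hγ₁U : γ₁ s ∈ U) (hD : ContinuousWithinAt D (I ×ˢ U) (s, γ₁ s))
    (hinv : (D (s, γ₁ s)).IsInvertible) (hγ₁ : ContinuousWithinAt γ₁ I s)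
    (hγ₂ : ContinuousWithinAt γ₂ I s) (hs : γ₁ s = γ₂ s)
    (hFγ : ∀ᶠ t in 𝓝[I] s, F (t, γ₁ t) = F (t, γ₂ t)) : γ₁ =ᶠ[𝓝[I] s] γ₂ := by
  obtain ⟨e, he⟩ := hinv
  rcases e.subsingleton_or_nnnorm_symm_pos with hX | hpos
  · exact Eventually.of_forall fun _ => Subsingleton.elim _ _
  set c : ℝ≥0 := ‖(e.symm : Y →L[ℝ] X)‖₊⁻¹ / 2
  obtain ⟨ρ, hρ, happrox⟩ :=
    exists_ball_eventually_approximatesLinearOn hU hF hγ₁U hD (c := c) (by positivity)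
  have hγ₁_ball : ∀ᶠ t in 𝓝[I] s, γ₁ t ∈ ball (γ₁ s) ρ := hγ₁.eventually (ball_mem_nhds _ hρ)
  have hγ₂_ball : ∀ᶠ t in 𝓝[I] s, γ₂ t ∈ ball (γ₁ s) ρ := hs ▸ hγ₂.eventually (ball_mem_nhds _ hρ)
  filter_upwards [happrox, hγ₁_ball, hγ₂_ball, hFγ] with t ht h₁ h₂ hFt
  rw [← he] at ht
  exact ht.injOn (.inr (NNReal.half_lt_self (inv_pos.2 hpos).ne')) h₁ h₂ hFt

end Implicit

theorem stmt10_general {X Y : Type*}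
    [NormedAddCommGroup X] [NormedSpace ℝ X]
    [NormedAddCommGroup Y] [NormedSpace ℝ Y]
    (I : Set ℝ) (hI : I.OrdConnected) (U : Set X) (hU : IsOpen U)
    (F : ℝ × X → Y) (hF : ContDiffOn ℝ 1 F (I ×ˢ U))
    (hinv : ∀ t ∈ I, ∀ x ∈ U, ∃ e : X ≃L[ℝ] Y,
      (e : X →L[ℝ] Y) = fderiv ℝ (fun y => F (t, y)) x)
    (γ₁ γ₂ : ℝ → X) (hγ₁c : ContinuousOn γ₁ I) (hγ₂c : ContinuousOn γ₂ I)
    (hγ₁U : ∀ t ∈ I, γ₁ t ∈ U)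
    (hγ₁ : ∀ t ∈ I, F (t, γ₁ t) = 0) (hγ₂ : ∀ t ∈ I, F (t, γ₂ t) = 0)
    (t₀ : ℝ) (ht₀ : t₀ ∈ I) (heq : γ₁ t₀ = γ₂ t₀) :
    Set.EqOn γ₁ γ₂ I := by
  -- `I` must have interior for the derivative within `I ×ˢ U` to be unique, hence continuous.
  rcases I.subsingleton_or_nontrivial with hIs | hIn
  · exact fun t ht => hIs ht₀ ht ▸ heq
  have hUD : UniqueDiffOn ℝ (I ×ˢ U) :=
    (uniqueDiffOn_convex hI.convex (hI.convex.nontrivial_iff_nonempty_interior.1 hIn)).prod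
      hU.uniqueDiffOn
  set D : ℝ × X → X →L[ℝ] Y := fun p => fderivWithin ℝ F (I ×ˢ U) p ∘L .inr ℝ ℝ X
  have hDc : ContinuousOn D (I ×ˢ U) :=
    (hF.continuousOn_fderivWithin hUD le_rfl).clm_comp continuousOn_const
  have hD : ∀ p ∈ I ×ˢ U, HasFDerivAt (fun x => F (p.1, x)) (D p) p.2 := fun p hp =>
    (hF.differentiableOn one_ne_zero p hp).hasFDerivWithinAt.hasFDerivAt_partial_snd hp.1
      (hU.mem_nhds hp.2)
  refine hI.isPreconnected.eqOn_of_eventuallyEq hγ₁c hγ₂c (fun s hs hs_eq => ?_) ht₀ heq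
  have hp : (s, γ₁ s) ∈ I ×ˢ U := ⟨hs, hγ₁U s hs⟩
  refine eventuallyEq_of_isInvertible_partialFDeriv hU hD hp.2 (hDc _ hp) ?_ (hγ₁c s hs)
    (hγ₂c s hs) hs_eq ?_
  · obtain ⟨e, he⟩ := hinv s hs _ hp.2
    exact ⟨e, he.trans (hD _ hp).fderiv⟩
  · filter_upwards [self_mem_nhdsWithin] with t ht
    rw [hγ₁ t ht, hγ₂ t ht]

/-- Global uniqueness of implicitly defined curves: if `F : I × U → Y` is `C¹` with invertible
partial derivative `D₂F` everywhere, two continuous solution curves of `F(t, γ(t)) = 0` that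
agree at one point of the interval `I` agree on all of `I`. -/
theorem stmt10 {X Y : Type*}
    [NormedAddCommGroup X] [NormedSpace ℝ X] [CompleteSpace X]
    [NormedAddCommGroup Y] [NormedSpace ℝ Y] [CompleteSpace Y]
    (I : Set ℝ) (hI : I.OrdConnected) (U : Set X) (hU : IsOpen U)
    (F : ℝ × X → Y) (hF : ContDiffOn ℝ 1 F (I ×ˢ U))
    (hinv : ∀ t ∈ I, ∀ x ∈ U, ∃ e : X ≃L[ℝ] Y,
      (e : X →L[ℝ] Y) = fderiv ℝ (fun y => F (t, y)) x)
    (γ₁ γ₂ : ℝ → X) (hγ₁c : ContinuousOn γ₁ I) (hγ₂c : ContinuousOn γ₂ I)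
    (hγ₁U : ∀ t ∈ I, γ₁ t ∈ U) (hγ₂U : ∀ t ∈ I, γ₂ t ∈ U)
    (hγ₁ : ∀ t ∈ I, F (t, γ₁ t) = 0) (hγ₂ : ∀ t ∈ I, F (t, γ₂ t) = 0)
    (t₀ : ℝ) (ht₀ : t₀ ∈ I) (heq : γ₁ t₀ = γ₂ t₀) :
    Set.EqOn γ₁ γ₂ I :=
  stmt10_general I hI U hU F hF hinv γ₁ γ₂ hγ₁c hγ₂c hγ₁U hγ₁ hγ₂ t₀ ht₀ heq
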